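/- arXiv:2507.15829 — 2 statements merged into one kernel-verified Lean document; each statement's English description precedes it below -/
import Mathlib

section
/- If the kernel b = Q^N[B] is piecewise constant on the N×N grid, then the unique solution p ∈ L^2_0([0,1]) of the continuum weak Poisson equation with kernel b and graphon w^N = Q^N[W^N] projects to the semi-discrete solution: p^N = Z^N[p], and the values P_i of p^N on I_i^N form a zero-sum solution of the discrete Kirchhoff law with conductivities B and sources S_i^N = ∫_{I_i^N} σ. -/
/-!
When the kernel, the graphon and the test function are all piecewise constant on the grid,
every integral in the weak Poisson equation sees `p` only through its cell integrals
`∫_{I_i} p` (Fubini, cell by cell). The continuum weak form tested with pixelated vectors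
therefore becomes a discrete weak form for these cell integrals. Since `Z^N[p]` has the same
cell integrals as `p`, it solves the semi-discrete problem, and testing the discrete form with
the indicator of one cell (shifted to mean zero) gives Kirchhoff's law, by symmetry of `B` and `W`.
-/

open MeasureTheory Set Filter

noncomputable def μI : Measure ℝ := volume.restrict (Set.Icc 0 1)
noncomputable def μsq : Measure (ℝ × ℝ) := μI.prod μI

/-- The grid cell `I_i^N` containing `x`, with clamped index. -/
def gridCell (N : ℕ) (x : ℝ) : Set ℝ :=
  Set.Icc (((min ⌊x * (N : ℝ)⌋.toNat (N - 1) : ℕ) : ℝ) / N)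
    ((((min ⌊x * (N : ℝ)⌋.toNat (N - 1) : ℕ) : ℝ) + 1) / N)

/-- The projection `Z^N` onto piecewise constant functions on the intervals `I_i^N`. -/
noncomputable def ZN1 (N : ℕ) (u : ℝ → ℝ) (x : ℝ) : ℝ :=
  (N : ℝ) * ∫ s in gridCell N x, u s

/-- The two-dimensional projection `Z^N` onto piecewise constant functions
on the patches `I_i^N × I_j^N`. -/
noncomputable def ZN2 (N : ℕ) (u : ℝ × ℝ → ℝ) (z : ℝ × ℝ) : ℝ :=
  (N : ℝ) ^ 2 * ∫ s in (gridCell N z.1) ×ˢ (gridCell N z.2), u s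

/-- Index of the grid cell containing `x` (clamped to `Fin N`). -/
noncomputable def gridIdxF (N : ℕ) (hN : 0 < N) (x : ℝ) : Fin N :=
  ⟨min ⌊x * (N : ℝ)⌋.toNat (N - 1), by omega⟩

/-- Pixel picture `Q^N` of a matrix. -/
noncomputable def pixM (N : ℕ) (hN : 0 < N) (B : Fin N → Fin N → ℝ) : ℝ × ℝ → ℝ :=
  fun z => B (gridIdxF N hN z.1) (gridIdxF N hN z.2)

/-- Pixelation `Q^N` of a vector. -/
noncomputable def pixV (N : ℕ) (hN : 0 < N) (P : Fin N → ℝ) : ℝ → ℝ :=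
  fun x => P (gridIdxF N hN x)

instance : IsFiniteMeasure μI := by
  rw [μI]
  infer_instance

instance : IsFiniteMeasure μsq := by
  rw [μsq]
  infer_instance

def cell (N : ℕ) (i : Fin N) : Set ℝ :=
  Set.Icc ((i : ℝ) / N) (((i : ℝ) + 1) / N)

section Grid

variable {N : ℕ}

lemma cell_subset_Icc (i : Fin N) : cell N i ⊆ Set.Icc 0 1 := by
  have hN : (0 : ℝ) < N := by exact_mod_cast i.pos
  have hi : (i : ℝ) + 1 ≤ N := by exact_mod_cast i.isLt
  exact Set.Icc_subset_Icc (by positivity) ((div_le_one hN).2 hi)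

lemma measureReal_cell (i : Fin N) : volume.real (cell N i) = (N : ℝ)⁻¹ := by
  rw [measureReal_def, cell, Real.volume_Icc, add_div, add_sub_cancel_left,
    ENNReal.toReal_ofReal (by positivity), one_div]

lemma integrableOn_cell {f : ℝ → ℝ} (hf : Integrable f μI) (i : Fin N) :
    IntegrableOn f (cell N i) :=
  IntegrableOn.mono_set hf (cell_subset_Icc i)

lemma gridIdxF_eq_of_mem_Ico (hN : 0 < N) (i : Fin N) {x : ℝ}
    (hx : x ∈ Set.Ico ((i : ℝ) / N) (((i : ℝ) + 1) / N)) : gridIdxF N hN x = i := by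
  have hN' : (0 : ℝ) < N := by exact_mod_cast hN
  have hfloor : ⌊x * N⌋ = (i : ℤ) := by
    rw [Int.floor_eq_iff]
    constructor
    · exact_mod_cast (div_le_iff₀ hN').1 hx.1
    · exact_mod_cast (lt_div_iff₀ hN').1 hx.2
  ext
  simp only [gridIdxF, hfloor, Int.toNat_natCast]
  omega

lemma measurable_gridIdxF (hN : 0 < N) : Measurable (gridIdxF N hN) :=
  (measurable_of_countable fun n : ℤ => (⟨min n.toNat (N - 1), by omega⟩ : Fin N)).comp
    (measurable_id.mul_const _).floor

lemma setIntegral_cell_comp_gridIdxF (hN : 0 < N) (h : Fin N → ℝ → ℝ) (i : Fin N) :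
    ∫ x in cell N i, h (gridIdxF N hN x) x = ∫ x in cell N i, h i x := by
  simp only [cell, integral_Icc_eq_integral_Ico]
  exact setIntegral_congr_fun measurableSet_Ico fun x hx => by
    rw [gridIdxF_eq_of_mem_Ico hN i hx]

lemma integral_eq_sum_cell (hN : 0 < N) {f : ℝ → ℝ} (hf : Integrable f μI) :
    ∫ x, f x ∂μI = ∑ i : Fin N, ∫ x in cell N i, f x := by
  have hN' : (N : ℝ) ≠ 0 := by exact_mod_cast hN.ne'
  have hadj := intervalIntegral.sum_integral_adjacent_intervals (f := f) (μ := volume)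
    (a := fun k : ℕ => (k : ℝ) / N) (n := N) fun k hk => by
      have := integrableOn_cell hf ⟨k, hk⟩
      simp only [cell, Nat.cast_add, Nat.cast_one] at this ⊢
      exact (intervalIntegrable_iff_integrableOn_Icc_of_le (by gcongr; linarith)).2 this
  simp only [Nat.cast_zero, zero_div, div_self hN'] at hadj
  rw [μI, integral_Icc_eq_integral_Ioc, ← intervalIntegral.integral_of_le zero_le_one,
    ← hadj, Finset.sum_range]
  refine Finset.sum_congr rfl fun i _ => ?_
  rw [intervalIntegral.integral_of_le (by gcongr; linarith), ← integral_Icc_eq_integral_Ioc]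
  simp only [cell, Nat.cast_add, Nat.cast_one]

end Grid

section Pixel

variable {N : ℕ} (hN : 0 < N)

lemma integral_comp_gridIdxF (h : Fin N → ℝ → ℝ)
    (hint : Integrable (fun x => h (gridIdxF N hN x) x) μI) :
    ∫ x, h (gridIdxF N hN x) x ∂μI = ∑ i : Fin N, ∫ x in cell N i, h i x := by
  rw [integral_eq_sum_cell hN hint]
  exact Finset.sum_congr rfl fun i _ => setIntegral_cell_comp_gridIdxF hN h i

lemma measurable_pixV (V : Fin N → ℝ) : Measurable (pixV N hN V) :=
  (measurable_of_countable V).comp (measurable_gridIdxF hN)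

lemma norm_pixV_le (V : Fin N → ℝ) (x : ℝ) : ‖pixV N hN V x‖ ≤ ‖V‖ :=
  norm_le_pi_norm V _

lemma memLp_pixV (V : Fin N → ℝ) {q : ENNReal} : MemLp (pixV N hN V) q μI :=
  .of_bound (measurable_pixV hN V).aestronglyMeasurable _ (ae_of_all _ (norm_pixV_le hN V))

lemma integral_mul_pixV {f : ℝ → ℝ} (hf : Integrable f μI) (V : Fin N → ℝ) :
    ∫ x, f x * pixV N hN V x ∂μI = ∑ i : Fin N, (∫ x in cell N i, f x) * V i := by
  refine (integral_comp_gridIdxF hN (fun i x => f x * V i)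
    (hf.mul_bdd (measurable_pixV hN V).aestronglyMeasurable
      (ae_of_all _ (norm_pixV_le hN V)))).trans ?_
  simp only [integral_mul_const]

lemma integral_pixV (V : Fin N → ℝ) : ∫ x, pixV N hN V x ∂μI = (N : ℝ)⁻¹ * ∑ i, V i := by
  simpa [setIntegral_const, measureReal_cell, Finset.mul_sum] using
    integral_mul_pixV hN (integrable_const 1) V

lemma setIntegral_cell_pixV (V : Fin N → ℝ) (i : Fin N) :
    ∫ x in cell N i, pixV N hN V x = (N : ℝ)⁻¹ * V i := by
  refine (setIntegral_cell_comp_gridIdxF hN (fun j _ => V j) i).trans ?_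
  rw [setIntegral_const, measureReal_cell, smul_eq_mul]

lemma measurable_pixM (K : Fin N → Fin N → ℝ) : Measurable (pixM N hN K) :=
  (measurable_of_countable fun ij : Fin N × Fin N => K ij.1 ij.2).comp
    (((measurable_gridIdxF hN).comp measurable_fst).prodMk
      ((measurable_gridIdxF hN).comp measurable_snd))

lemma norm_pixM_le (K : Fin N → Fin N → ℝ) (z : ℝ × ℝ) : ‖pixM N hN K z‖ ≤ ‖K‖ :=
  (norm_le_pi_norm (K _) _).trans (norm_le_pi_norm K _)

lemma integral_pixM_mul_fst (K : Fin N → Fin N → ℝ) {u : ℝ → ℝ} (hu : Integrable u μI) :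
    ∫ z, pixM N hN K z * u z.1 ∂μsq
      = (N : ℝ)⁻¹ * ∑ i, ∑ j, K i j * ∫ x in cell N i, u x := by
  have hint : Integrable (fun z => pixM N hN K z * u z.1) μsq :=
    (hu.comp_fst μI).bdd_mul (measurable_pixM hN K).aestronglyMeasurable
      (ae_of_all _ (norm_pixM_le hN K))
  calc ∫ z, pixM N hN K z * u z.1 ∂μsq
      = ∫ x, ∫ y, pixV N hN (K (gridIdxF N hN x)) y * u x ∂μI ∂μI := integral_prod _ hint
    _ = ∫ x, u x * pixV N hN (fun i => (N : ℝ)⁻¹ * ∑ j, K i j) x ∂μI := by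
        simp only [integral_mul_const, integral_pixV, mul_comm (u _)]
        rfl
    _ = (N : ℝ)⁻¹ * ∑ i, ∑ j, K i j * ∫ x in cell N i, u x := by
        simp only [integral_mul_pixV hN hu, Finset.mul_sum]
        exact Finset.sum_congr rfl fun i _ => Finset.sum_congr rfl fun j _ => by ring

lemma integral_pixM_mul_snd (K : Fin N → Fin N → ℝ) {u : ℝ → ℝ} (hu : Integrable u μI) :
    ∫ z, pixM N hN K z * u z.2 ∂μsq
      = (N : ℝ)⁻¹ * ∑ i, ∑ j, K i j * ∫ x in cell N j, u x := by
  rw [μsq, ← integral_prod_swap]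
  exact (integral_pixM_mul_fst hN (fun i j => K j i) hu).trans (congrArg _ Finset.sum_comm)

lemma integral_pixM_mul_sub (K : Fin N → Fin N → ℝ) {u : ℝ → ℝ} (hu : Integrable u μI) :
    ∫ z, pixM N hN K z * (u z.1 - u z.2) ∂μsq
      = (N : ℝ)⁻¹ * ∑ i, ∑ j, K i j * ((∫ x in cell N i, u x) - ∫ x in cell N j, u x) := by
  have hbdd {v : ℝ × ℝ → ℝ} (hv : Integrable v μsq) :
      Integrable (fun z => pixM N hN K z * v z) μsq :=
    hv.bdd_mul (measurable_pixM hN K).aestronglyMeasurable (ae_of_all _ (norm_pixM_le hN K))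
  simp only [mul_sub]
  rw [integral_sub (hbdd (hu.comp_fst μI)) (hbdd (hu.comp_snd μI)), integral_pixM_mul_fst hN K hu,
    integral_pixM_mul_snd hN K hu]
  simp only [← mul_sub, ← Finset.sum_sub_distrib]

lemma integral_pixel_energy (B W : Fin N → Fin N → ℝ) (Φ : Fin N → ℝ)
    {u : ℝ → ℝ} (hu : Integrable u μI) :
    ∫ z, pixM N hN B z * (u z.1 - u z.2) * (pixV N hN Φ z.1 - pixV N hN Φ z.2)
        * pixM N hN W z ∂μsq
      = (N : ℝ)⁻¹ * ∑ i, ∑ j, B i j * W i j * (Φ i - Φ j)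
          * ((∫ x in cell N i, u x) - ∫ x in cell N j, u x) := by
  rw [← integral_pixM_mul_sub hN _ hu]
  congr 1
  ext z
  simp only [pixM, pixV]
  ring

end Pixel

lemma setIntegral_cell_ZN1 {N : ℕ} (hN : 0 < N) (u : ℝ → ℝ) (i : Fin N) :
    ∫ x in cell N i, ZN1 N u x = ∫ x in cell N i, u x := by
  have hN' : (N : ℝ) ≠ 0 := by exact_mod_cast hN.ne'
  change ∫ x in cell N i, pixV N hN (fun j => (N : ℝ) * ∫ s in cell N j, u s) x = _
  rw [setIntegral_cell_pixV, inv_mul_cancel_left₀ hN']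

theorem kirchhoff_of_weak_form {ι : Type*} [Fintype ι] [DecidableEq ι] {K : ι → ι → ℝ}
    (hK : ∀ i j, K i j = K j i) {P S : ι → ℝ} (hS : ∑ i, S i = 0)
    (hweak : ∀ Φ : ι → ℝ, ∑ i, Φ i = 0 →
      (1 / 2) * ∑ i, ∑ j, K i j * (Φ i - Φ j) * (P i - P j) = ∑ i, S i * Φ i)
    (i : ι) : ∑ j, K i j * (P i - P j) = S i := by
  -- The form only sees differences of `Φ` and `∑ S = 0`, so shifting `Φ` to mean zero is harmless.
  have hweak' (Φ : ι → ℝ) :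
      (1 / 2) * ∑ i, ∑ j, K i j * (Φ i - Φ j) * (P i - P j) = ∑ i, S i * Φ i := by
    have hcard : (Fintype.card ι : ℝ) ≠ 0 := by
      have : Nonempty ι := ⟨i⟩
      exact_mod_cast Fintype.card_ne_zero
    set c := (Fintype.card ι : ℝ)⁻¹ * ∑ i, Φ i
    have h0 : ∑ i, (Φ i - c) = 0 := by
      rw [Finset.sum_sub_distrib, Finset.sum_const, Finset.card_univ, nsmul_eq_mul,
        mul_inv_cancel_left₀ hcard, sub_self]
    simpa [mul_sub, Finset.sum_sub_distrib, ← Finset.sum_mul, hS] using hweak _ h0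
  have hsingle := hweak' (Pi.single i 1)
  simp only [Pi.single_apply, mul_sub, mul_ite, mul_one, mul_zero, sub_mul, ite_mul, zero_mul,
    Finset.sum_sub_distrib, Finset.sum_ite_irrel, Finset.sum_const_zero, Finset.sum_ite_eq',
    Finset.mem_univ, if_true] at hsingle
  have hcol (f : ι → ℝ) : ∑ j, K j i * f j = ∑ j, K i j * f j :=
    Finset.sum_congr rfl fun j _ => by rw [hK]
  rw [hcol, hcol] at hsingle
  rw [← hsingle]
  simp only [mul_sub, Finset.sum_sub_distrib]
  ring

theorem continuum_solution_projects_general (N : ℕ) (hN : 0 < N)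
    (σ : ℝ → ℝ) (hσ : MemLp σ 2 μI) (hσ0 : ∫ x, σ x ∂μI = 0)
    (W B : Fin N → Fin N → ℝ)
    (hWsym : ∀ i j, W i j = W j i)
    (hBsym : ∀ i j, B i j = B j i)
    (p : ℝ → ℝ) (hp : MemLp p 2 μI) (hp0 : ∫ x, p x ∂μI = 0)
    (hsol : ∀ φ : ℝ → ℝ, MemLp φ 2 μI → (∫ x, φ x ∂μI) = 0 →
      (1 / 2) * ∫ z, pixM N hN B z * (p z.1 - p z.2) * (φ z.1 - φ z.2)
          * pixM N hN W z ∂μsq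
        = ∫ x, σ x * φ x ∂μI) :
    (∀ Φ : Fin N → ℝ, (∑ i, Φ i = 0) →
      (1 / 2) * ∫ z, pixM N hN B z * (ZN1 N p z.1 - ZN1 N p z.2)
          * (pixV N hN Φ z.1 - pixV N hN Φ z.2) * pixM N hN W z ∂μsq
        = ∫ x, σ x * pixV N hN Φ x ∂μI) ∧
    (∀ x : ℝ, ZN1 N p x
      = pixV N hN (fun i => (N : ℝ) *
          ∫ s in Set.Icc ((i.val : ℝ) / N) (((i.val : ℝ) + 1) / N), p s) x) ∧
    (∑ i : Fin N, ((N : ℝ) *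
        ∫ s in Set.Icc ((i.val : ℝ) / N) (((i.val : ℝ) + 1) / N), p s) = 0) ∧
    (∀ i : Fin N, -(1 / (N : ℝ) ^ 2) * ∑ j, W i j * B i j *
          (((N : ℝ) * ∫ s in Set.Icc ((j.val : ℝ) / N) (((j.val : ℝ) + 1) / N), p s)
            - ((N : ℝ) * ∫ s in Set.Icc ((i.val : ℝ) / N) (((i.val : ℝ) + 1) / N), p s))
        = ∫ x in Set.Icc ((i.val : ℝ) / N) (((i.val : ℝ) + 1) / N), σ x) := by
  have hpI : Integrable p μI := hp.integrable one_le_two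
  have hσI : Integrable σ μI := hσ.integrable one_le_two
  have hweak (Φ : Fin N → ℝ) (hΦ : ∑ i, Φ i = 0) :
      (1 / 2) * ((N : ℝ)⁻¹ * ∑ i, ∑ j, B i j * W i j * (Φ i - Φ j)
          * ((∫ x in cell N i, p x) - ∫ x in cell N j, p x))
        = ∑ i, (∫ x in cell N i, σ x) * Φ i := by
    rw [← integral_pixel_energy hN B W Φ hpI, ← integral_mul_pixV hN hσI]
    exact hsol _ (memLp_pixV hN Φ) (by rw [integral_pixV, hΦ, mul_zero])
  refine ⟨fun Φ hΦ => ?_, fun x => rfl, ?_, fun i => ?_⟩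
  · have hZ : Integrable (ZN1 N p) μI :=
      (memLp_pixV hN fun j => (N : ℝ) * ∫ x in cell N j, p x).integrable one_le_two
    rw [integral_pixel_energy hN B W Φ hZ, integral_mul_pixV hN hσI]
    simp only [setIntegral_cell_ZN1 hN]
    exact hweak Φ hΦ
  · rw [← Finset.mul_sum]
    exact mul_eq_zero_of_right _ ((integral_eq_sum_cell hN hpI).symm.trans hp0)
  · have hkirchhoff := kirchhoff_of_weak_form (K := fun i j => (N : ℝ)⁻¹ * (B i j * W i j))
      (P := fun i => ∫ x in cell N i, p x)
      (fun i j => by rw [hBsym, hWsym]) (by rw [← integral_eq_sum_cell hN hσI, hσ0])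
      (fun Φ hΦ => by simp only [← hweak Φ hΦ, Finset.mul_sum, mul_assoc]) i
    have hscale (a b c : ℝ) :
        -(1 / (N : ℝ) ^ 2) * (c * (N * a - N * b)) = (N : ℝ)⁻¹ * c * (b - a) := by
      have hN' : (N : ℝ) ≠ 0 := by exact_mod_cast hN.ne'
      field_simp
      ring
    refine Eq.trans ?_ hkirchhoff
    rw [Finset.mul_sum]
    refine Finset.sum_congr rfl fun j _ => ?_
    rw [hscale, mul_comm (W i j)]
    rfl

/-- For a piecewise constant kernel `Q^N[B]` and graphon `Q^N[W]`, the solution `p` of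
the continuum weak Poisson equation projects to the semi-discrete solution:
`Z^N[p]` solves the semi-discrete equation, it coincides with the pixelation of the
vector `P` of its cell averages, and `P` is a zero-sum solution of the discrete
Kirchhoff law with conductivities `B` and sources `Sᵢ = ∫_{Iᵢᴺ} σ`. -/
theorem continuum_solution_projects (N : ℕ) (hN : 0 < N)
    (r lam : ℝ) (hr : 0 < r) (hlam : 0 < lam)
    (σ : ℝ → ℝ) (hσ : MemLp σ 2 μI) (hσ0 : ∫ x, σ x ∂μI = 0)
    (W B : Fin N → Fin N → ℝ)
    (hW01 : ∀ i j, W i j = 0 ∨ W i j = 1) (hWsym : ∀ i j, W i j = W j i)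
    (hconn : ∀ z : Fin N → ℝ, (∑ i, z i) = 0 →
      lam * N * ∑ i, (z i) ^ 2 ≤ ∑ i, ∑ j, (z i - z j) ^ 2 * W i j)
    (hBsym : ∀ i j, B i j = B j i)
    (hBr : ∀ i j, W i j = 1 → r ≤ B i j) (hB0 : ∀ i j, W i j = 0 → B i j = 0)
    (p : ℝ → ℝ) (hp : MemLp p 2 μI) (hp0 : ∫ x, p x ∂μI = 0)
    (hsol : ∀ φ : ℝ → ℝ, MemLp φ 2 μI → (∫ x, φ x ∂μI) = 0 →
      (1 / 2) * ∫ z, pixM N hN B z * (p z.1 - p z.2) * (φ z.1 - φ z.2)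
          * pixM N hN W z ∂μsq
        = ∫ x, σ x * φ x ∂μI) :
    (∀ Φ : Fin N → ℝ, (∑ i, Φ i = 0) →
      (1 / 2) * ∫ z, pixM N hN B z * (ZN1 N p z.1 - ZN1 N p z.2)
          * (pixV N hN Φ z.1 - pixV N hN Φ z.2) * pixM N hN W z ∂μsq
        = ∫ x, σ x * pixV N hN Φ x ∂μI) ∧
    (∀ x : ℝ, ZN1 N p x
      = pixV N hN (fun i => (N : ℝ) *
          ∫ s in Set.Icc ((i.val : ℝ) / N) (((i.val : ℝ) + 1) / N), p s) x) ∧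
    (∑ i : Fin N, ((N : ℝ) *
        ∫ s in Set.Icc ((i.val : ℝ) / N) (((i.val : ℝ) + 1) / N), p s) = 0) ∧
    (∀ i : Fin N, -(1 / (N : ℝ) ^ 2) * ∑ j, W i j * B i j *
          (((N : ℝ) * ∫ s in Set.Icc ((j.val : ℝ) / N) (((j.val : ℝ) + 1) / N), p s)
            - ((N : ℝ) * ∫ s in Set.Icc ((i.val : ℝ) / N) (((i.val : ℝ) + 1) / N), p s))
        = ∫ x in Set.Icc ((i.val : ℝ) / N) (((i.val : ℝ) + 1) / N), σ x) :=
  continuum_solution_projects_general N hN σ hσ hσ0 W B hWsym hBsym p hp hp0 hsol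
end

section
/- Uniform energy bound for minimizers: let B^N minimize the rescaled discrete energy F^N over the set of symmetric matrices with entries ≥ r on edges and 0 off edges. Under the connectivity assumption with constant λ and the bound L^N_{ij} ≤ 1, one has F^N[B^N] ≤ (4/(rλ^2)) ∫_0^1 σ(x)^2 dx + (ν/(2γ)) r^γ for every N. -/
open MeasureTheory Set Filter

/-! The constant conductance `B = r W` is admissible, so `F^N[B^N] ≤ F^N[r W]`. Since `L ≤ 1`, the
second part of `F^N[r W]` is at most `(ν/(2γ)) r^γ`, and the first is `r/(2N²)` times the Dirichlet
form `∑ (P_i - P_j)² = 2N ∑ P_i²` of its zero-mean pressure. Testing the Kirchhoff law against `P`,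
the connectivity inequality and Cauchy–Schwarz bound `∑ P_i²` by `∑ S_i²`, and Jensen on each cell
`[i/N, (i+1)/N]` gives `∑ S_i² ≤ (1/N) ∫ σ²`. -/

section DirichletForm

variable {ι : Type*} [Fintype ι]

theorem sum_sum_sub_sq_of_sum_eq_zero {z : ι → ℝ} (hz : ∑ i, z i = 0) :
    ∑ i, ∑ j, (z i - z j) ^ 2 = 2 * Fintype.card ι * ∑ i, z i ^ 2 := by
  simp only [sub_sq, Finset.sum_add_distrib, Finset.sum_sub_distrib, ← Finset.mul_sum,
    ← Finset.sum_mul, hz, Finset.sum_const, Finset.card_univ, nsmul_eq_mul]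
  ring

theorem two_mul_sum_mul_sum_sub_eq {w : ι → ι → ℝ} (hw : ∀ i j, w i j = w j i) (z : ι → ℝ) :
    2 * ∑ i, z i * ∑ j, w i j * (z j - z i) = -∑ i, ∑ j, (z i - z j) ^ 2 * w i j := by
  have hswap : ∑ i, z i * ∑ j, w i j * (z j - z i) = ∑ i, ∑ j, w i j * (z i - z j) * z j := by
    simp only [Finset.mul_sum]
    rw [Finset.sum_comm]
    exact Finset.sum_congr rfl fun i _ => Finset.sum_congr rfl fun j _ => by rw [hw]; ring
  calc 2 * ∑ i, z i * ∑ j, w i j * (z j - z i)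
      = ∑ i, z i * ∑ j, w i j * (z j - z i) + ∑ i, ∑ j, w i j * (z i - z j) * z j := by
        rw [← hswap]; ring
    _ = -∑ i, ∑ j, (z i - z j) ^ 2 * w i j := by
        simp only [Finset.mul_sum, ← Finset.sum_add_distrib, ← Finset.sum_neg_distrib]
        exact Finset.sum_congr rfl fun i _ => Finset.sum_congr rfl fun j _ => by ring

theorem sum_sq_le_of_neg_laplacian_eq {w : ι → ι → ℝ} (hw : ∀ i j, w i j = w j i) {c κ : ℝ}
    (hc : 0 ≤ c) (hκ : 0 ≤ κ)
    (hcoer : ∀ z : ι → ℝ, ∑ i, z i = 0 → c * ∑ i, z i ^ 2 ≤ ∑ i, ∑ j, (z i - z j) ^ 2 * w i j)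
    {p s : ι → ℝ} (hp : ∑ i, p i = 0) (hs : ∀ i, -κ * ∑ j, w i j * (p j - p i) = s i) :
    (κ * c) ^ 2 * ∑ i, p i ^ 2 ≤ 4 * ∑ i, s i ^ 2 := by
  set q := ∑ i, p i ^ 2
  have hsp : 2 * ∑ i, s i * p i = κ * ∑ i, ∑ j, (p i - p j) ^ 2 * w i j := by
    have hsum : ∑ i, s i * p i = -κ * ∑ i, p i * ∑ j, w i j * (p j - p i) := by
      rw [Finset.mul_sum]
      exact Finset.sum_congr rfl fun i _ => by rw [← hs i]; ring
    rw [hsum]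
    linear_combination (-κ) * two_mul_sum_mul_sum_sub_eq hw p
  have hlow : κ * c * q ≤ 2 * ∑ i, s i * p i := by
    rw [hsp, mul_assoc]
    exact mul_le_mul_of_nonneg_left (hcoer p hp) hκ
  have hq : 0 ≤ q := Finset.sum_nonneg fun i _ => sq_nonneg _
  have hCS := Finset.sum_mul_sq_le_sq_mul_sq Finset.univ s p
  have hsq : ((κ * c) ^ 2 * q) * q ≤ (4 * ∑ i, s i ^ 2) * q := by
    nlinarith [pow_le_pow_left₀ (by positivity) hlow 2]
  rcases hq.eq_or_lt with hq0 | hqpos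
  · rw [← hq0, mul_zero]; positivity
  · exact le_of_mul_le_mul_right hsq hqpos

end DirichletForm

theorem sq_setIntegral_le_measureReal_mul {α : Type*} [MeasurableSpace α] {μ : Measure α}
    {s : Set α} (hs : μ s ≠ ⊤) {f : α → ℝ} (hf : IntegrableOn f s μ)
    (hf2 : IntegrableOn (fun x => f x ^ 2) s μ) :
    (∫ x in s, f x ∂μ) ^ 2 ≤ μ.real s * ∫ x in s, f x ^ 2 ∂μ := by
  rcases eq_or_ne (μ s) 0 with hs0 | hs0
  · simp [Measure.restrict_eq_zero.mpr hs0]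
  have hpos : 0 < μ.real s := ENNReal.toReal_pos hs0 hs
  have hJensen : (⨍ x in s, f x ∂μ) ^ 2 ≤ ⨍ x in s, f x ^ 2 ∂μ :=
    (even_two.convexOn_pow).map_set_average_le (continuousOn_pow 2) isClosed_univ hs0 hs
      (by simp) hf hf2
  rw [setAverage_eq, setAverage_eq, smul_eq_mul, smul_eq_mul, mul_pow, inv_pow,
    ← div_eq_inv_mul, ← div_eq_inv_mul, div_le_div_iff₀ (by positivity) hpos] at hJensen
  nlinarith

theorem Icc_div_subset_Icc {N : ℕ} {k : ℕ} (hk : k < N) :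
    Icc ((k : ℝ) / N) ((k + 1) / N) ⊆ Icc 0 1 := by
  have hN : (0 : ℝ) < N := by exact_mod_cast (k.zero_le.trans_lt hk)
  exact Icc_subset_Icc (by positivity) ((div_le_one hN).2 (by exact_mod_cast hk))

theorem sum_setIntegral_Icc_div {g : ℝ → ℝ} (hg : IntegrableOn g (Icc 0 1)) {N : ℕ}
    (hN : 0 < N) :
    ∑ i : Fin N, ∫ x in Icc ((i : ℝ) / N) ((i + 1) / N), g x = ∫ x in Icc 0 1, g x := by
  have hcell : ∀ k : ℕ, ∫ x in Icc ((k : ℝ) / N) ((k + 1) / N), g x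
      = ∫ x in (k : ℝ) / N..((k + 1 : ℕ) : ℝ) / N, g x := by
    intro k
    rw [integral_Icc_eq_integral_Ioc, intervalIntegral.integral_of_le (by gcongr; simp)]
    push_cast; rfl
  rw [Fin.sum_univ_eq_sum_range (fun k => ∫ x in Icc ((k : ℝ) / N) ((k + 1) / N), g x),
    integral_Icc_eq_integral_Ioc, ← intervalIntegral.integral_of_le zero_le_one]
  simp only [hcell]
  rw [intervalIntegral.sum_integral_adjacent_intervals (a := fun k : ℕ => (k : ℝ) / N)]
  · have : (N : ℝ) ≠ 0 := by positivity
    simp [this]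
  · intro k hk
    refine (hg.mono_set ?_).intervalIntegrable
    rw [uIcc_of_le (by gcongr; simp)]
    simpa using Icc_div_subset_Icc hk

theorem sum_sq_setIntegral_Icc_div_le {f : ℝ → ℝ} (hf : MemLp f 2 μI) {N : ℕ} (hN : 0 < N) :
    ∑ i : Fin N, (∫ x in Icc ((i : ℝ) / N) ((i + 1) / N), f x) ^ 2
      ≤ 1 / N * ∫ x, f x ^ 2 ∂μI := by
  have : IsFiniteMeasure μI := by unfold μI; infer_instance
  have hf1 : IntegrableOn f (Icc 0 1) := hf.integrable one_le_two
  have hf2 : IntegrableOn (fun x => f x ^ 2) (Icc 0 1) := hf.integrable_sq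
  have hcell : ∀ i : Fin N, (∫ x in Icc ((i : ℝ) / N) ((i + 1) / N), f x) ^ 2
      ≤ 1 / N * ∫ x in Icc ((i : ℝ) / N) ((i + 1) / N), f x ^ 2 := by
    intro i
    have hsub := Icc_div_subset_Icc i.isLt
    convert sq_setIntegral_le_measureReal_mul measure_Icc_lt_top.ne (hf1.mono_set hsub)
      (hf2.mono_set hsub) using 2
    rw [Real.volume_real_Icc_of_le (by gcongr; simp)]
    ring
  calc _ ≤ ∑ i : Fin N, 1 / N * ∫ x in Icc ((i : ℝ) / N) ((i + 1) / N), f x ^ 2 :=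
        Finset.sum_le_sum fun i _ => hcell i
    _ = 1 / N * ∫ x, f x ^ 2 ∂μI := by rw [← Finset.mul_sum, sum_setIntegral_Icc_div hf2 hN]; rfl

theorem energy_const_mul_adjacency_le {ι : Type*} [Fintype ι] [Nonempty ι]
    {W L : ι → ι → ℝ} (hW01 : ∀ i j, W i j = 0 ∨ W i j = 1) (hL0 : ∀ i j, 0 ≤ L i j)
    (hL1 : ∀ i j, L i j ≤ 1) {γ ν r : ℝ} (hγ : 0 < γ) (hν : 0 ≤ ν) (hr : 0 ≤ r) (p : ι → ℝ) :
    1 / (2 * (Fintype.card ι : ℝ) ^ 2) * ∑ i, ∑ j,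
        (r * W i j * (p j - p i) ^ 2 + ν / γ * (r * W i j) ^ γ * L i j ^ (γ + 1)) * W i j
      ≤ r / (2 * (Fintype.card ι : ℝ) ^ 2) * ∑ i, ∑ j, (p i - p j) ^ 2 + ν / (2 * γ) * r ^ γ := by
  have hterm : ∀ i j,
      (r * W i j * (p j - p i) ^ 2 + ν / γ * (r * W i j) ^ γ * L i j ^ (γ + 1)) * W i j
        ≤ r * (p i - p j) ^ 2 + ν / γ * r ^ γ := by
    intro i j
    rcases hW01 i j with h | h <;> simp only [h, mul_zero, mul_one]
    · positivity
    · have hLγ : L i j ^ (γ + 1) ≤ 1 := Real.rpow_le_one (hL0 i j) (hL1 i j) (by positivity)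
      have : ν / γ * r ^ γ * L i j ^ (γ + 1) ≤ ν / γ * r ^ γ :=
        mul_le_of_le_one_right (by positivity) hLγ
      linarith [sub_sq_comm (p i) (p j)]
  have hn : (Fintype.card ι : ℝ) ≠ 0 := by positivity
  calc _ ≤ 1 / (2 * (Fintype.card ι : ℝ) ^ 2) * ∑ i : ι, ∑ j : ι,
        (r * (p i - p j) ^ 2 + ν / γ * r ^ γ) := by
        gcongr with i _ j _
        exact hterm i j
    _ = _ := by
        simp only [Finset.sum_add_distrib, ← Finset.mul_sum, Finset.sum_const, Finset.card_univ,
          nsmul_eq_mul]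
        field_simp

theorem kirchhoff_estimate {N : ℕ} (hN : 0 < N) {W : Fin N → Fin N → ℝ}
    (hW01 : ∀ i j, W i j = 0 ∨ W i j = 1) (hWsym : ∀ i j, W i j = W j i) {lam r : ℝ}
    (hlam : 0 < lam) (hr : 0 < r)
    (hconn : ∀ z : Fin N → ℝ, ∑ i, z i = 0 →
      lam * N * ∑ i, z i ^ 2 ≤ ∑ i, ∑ j, (z i - z j) ^ 2 * W i j)
    {σ : ℝ → ℝ} (hσ : MemLp σ 2 μI) {p : Fin N → ℝ} (hp0 : ∑ i, p i = 0)
    (hp : ∀ i : Fin N, -(1 / (N : ℝ) ^ 2) * ∑ j, W i j * (r * W i j) * (p j - p i)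
      = ∫ x in Icc ((i : ℝ) / N) ((i + 1) / N), σ x) :
    ∑ i, ∑ j, (p i - p j) ^ 2 ≤ 8 * N ^ 2 / (r * lam) ^ 2 * ∫ x, σ x ^ 2 ∂μI := by
  have hW2 : ∀ i j, W i j * (r * W i j) = r * W i j := fun i j => by
    rcases hW01 i j with h | h <;> simp [h]
  have hcoer : ∀ z : Fin N → ℝ, ∑ i, z i = 0 →
      r * (lam * N) * ∑ i, z i ^ 2 ≤ ∑ i, ∑ j, (z i - z j) ^ 2 * (W i j * (r * W i j)) := by
    intro z hz
    simp only [hW2, mul_left_comm _ r, ← Finset.mul_sum, mul_assoc]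
    exact mul_le_mul_of_nonneg_left (by simpa [mul_assoc] using hconn z hz) hr.le
  have hpoisson := sum_sq_le_of_neg_laplacian_eq (w := fun i j => W i j * (r * W i j))
    (fun i j => by simp only [hWsym i j]) (by positivity) (by positivity) hcoer hp0 hp
  have hsources := hpoisson.trans
    (mul_le_mul_of_nonneg_left (sum_sq_setIntegral_Icc_div_le hσ hN) zero_le_four)
  have hNR : (0 : ℝ) < N := by exact_mod_cast hN
  rw [sum_sum_sub_sq_of_sum_eq_zero hp0, Fintype.card_fin]
  calc 2 * (N : ℝ) * ∑ i, p i ^ 2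
      = 2 * N ^ 3 / (r * lam) ^ 2 * ((1 / (N : ℝ) ^ 2 * (r * (lam * N))) ^ 2 * ∑ i, p i ^ 2) := by
        field_simp
    _ ≤ 2 * N ^ 3 / (r * lam) ^ 2 * (4 * (1 / N * ∫ x, σ x ^ 2 ∂μI)) := by gcongr
    _ = 8 * N ^ 2 / (r * lam) ^ 2 * ∫ x, σ x ^ 2 ∂μI := by field_simp; ring

theorem minimizer_energy_bound_general (N : ℕ) (hN : 0 < N)
    (γ ν r lam : ℝ) (hγ : 1 < γ) (hν : 0 < ν) (hr : 0 < r) (hlam : 0 < lam)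
    (σ : ℝ → ℝ) (hσ : MemLp σ 2 μI)
    (W L : Fin N → Fin N → ℝ)
    (hW01 : ∀ i j, W i j = 0 ∨ W i j = 1) (hWsym : ∀ i j, W i j = W j i)
    (hconn : ∀ z : Fin N → ℝ, (∑ i, z i) = 0 →
      lam * N * ∑ i, (z i) ^ 2 ≤ ∑ i, ∑ j, (z i - z j) ^ 2 * W i j)
    (hLpos : ∀ i j, 0 < L i j) (hL1 : ∀ i j, L i j ≤ 1)
    (adm : (Fin N → Fin N → ℝ) → Prop)
    (hadm : ∀ B, adm B ↔ ((∀ i j, B i j = B j i) ∧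
      ∀ i j, (W i j = 1 → r ≤ B i j) ∧ (W i j = 0 → B i j = 0)))
    (P : (Fin N → Fin N → ℝ) → (Fin N → ℝ))
    (hP : ∀ B, adm B → (∑ i, P B i = 0) ∧
      ∀ i : Fin N, -(1 / (N : ℝ) ^ 2) * ∑ j, W i j * B i j * (P B j - P B i)
        = ∫ x in Set.Icc ((i.val : ℝ) / N) (((i.val : ℝ) + 1) / N), σ x)
    (FN : (Fin N → Fin N → ℝ) → ℝ)
    (hFN : ∀ B, FN B = (1 / (2 * (N : ℝ) ^ 2)) * ∑ i, ∑ j,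
      (B i j * (P B j - P B i) ^ 2 + (ν / γ) * B i j ^ γ * L i j ^ (γ + 1)) * W i j)
    (Bopt : Fin N → Fin N → ℝ)
    (hmin : ∀ B, adm B → FN Bopt ≤ FN B) :
    FN Bopt ≤ (4 / (r * lam ^ 2)) * (∫ x, (σ x) ^ 2 ∂μI) + (ν / (2 * γ)) * r ^ γ := by
  have : Nonempty (Fin N) := ⟨⟨0, hN⟩⟩
  set B : Fin N → Fin N → ℝ := fun i j => r * W i j
  have hBadm : adm B := (hadm B).2 ⟨fun i j => by simp only [B, hWsym i j],
    fun i j => ⟨fun h => by simp [B, h], fun h => by simp [B, h]⟩⟩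
  obtain ⟨hP0, hPeq⟩ := hP B hBadm
  have hK := kirchhoff_estimate hN hW01 hWsym hlam hr hconn hσ hP0 hPeq
  have hFB := energy_const_mul_adjacency_le hW01 (fun i j => (hLpos i j).le) hL1
    (zero_lt_one.trans hγ) hν.le hr.le (P B)
  rw [Fintype.card_fin, ← hFN] at hFB
  have hNR : (0 : ℝ) < N := by exact_mod_cast hN
  calc FN Bopt ≤ FN B := hmin B hBadm
    _ ≤ r / (2 * (N : ℝ) ^ 2) * ∑ i, ∑ j, (P B i - P B j) ^ 2 + ν / (2 * γ) * r ^ γ := hFB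
    _ ≤ r / (2 * (N : ℝ) ^ 2) * (8 * N ^ 2 / (r * lam) ^ 2 * ∫ x, σ x ^ 2 ∂μI)
          + ν / (2 * γ) * r ^ γ := by gcongr
    _ = 4 / (r * lam ^ 2) * (∫ x, σ x ^ 2 ∂μI) + ν / (2 * γ) * r ^ γ := by field_simp; ring

/-- Uniform energy bound for minimizers of the rescaled discrete energy: if `Bopt`
minimizes `F^N` over the admissible set (symmetric, `≥ r` on edges, `0` off edges),
then `F^N[Bopt] ≤ (4/(rλ²)) ∫ σ² + (ν/(2γ)) r^γ`. -/
theorem minimizer_energy_bound (N : ℕ) (hN : 0 < N)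
    (γ ν r lam : ℝ) (hγ : 1 < γ) (hν : 0 < ν) (hr : 0 < r) (hlam : 0 < lam)
    (σ : ℝ → ℝ) (hσ : MemLp σ 2 μI) (hσ0 : ∫ x, σ x ∂μI = 0)
    (W L : Fin N → Fin N → ℝ)
    (hW01 : ∀ i j, W i j = 0 ∨ W i j = 1) (hWsym : ∀ i j, W i j = W j i)
    (hconn : ∀ z : Fin N → ℝ, (∑ i, z i) = 0 →
      lam * N * ∑ i, (z i) ^ 2 ≤ ∑ i, ∑ j, (z i - z j) ^ 2 * W i j)
    (hLsym : ∀ i j, L i j = L j i) (hLpos : ∀ i j, 0 < L i j) (hL1 : ∀ i j, L i j ≤ 1)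
    (adm : (Fin N → Fin N → ℝ) → Prop)
    (hadm : ∀ B, adm B ↔ ((∀ i j, B i j = B j i) ∧
      ∀ i j, (W i j = 1 → r ≤ B i j) ∧ (W i j = 0 → B i j = 0)))
    (P : (Fin N → Fin N → ℝ) → (Fin N → ℝ))
    (hP : ∀ B, adm B → (∑ i, P B i = 0) ∧
      ∀ i : Fin N, -(1 / (N : ℝ) ^ 2) * ∑ j, W i j * B i j * (P B j - P B i)
        = ∫ x in Set.Icc ((i.val : ℝ) / N) (((i.val : ℝ) + 1) / N), σ x)
    (FN : (Fin N → Fin N → ℝ) → ℝ)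
    (hFN : ∀ B, FN B = (1 / (2 * (N : ℝ) ^ 2)) * ∑ i, ∑ j,
      (B i j * (P B j - P B i) ^ 2 + (ν / γ) * B i j ^ γ * L i j ^ (γ + 1)) * W i j)
    (Bopt : Fin N → Fin N → ℝ) (hBopt : adm Bopt)
    (hmin : ∀ B, adm B → FN Bopt ≤ FN B) :
    FN Bopt ≤ (4 / (r * lam ^ 2)) * (∫ x, (σ x) ^ 2 ∂μI) + (ν / (2 * γ)) * r ^ γ :=
  minimizer_energy_bound_general N hN γ ν r lam hγ hν hr hlam σ hσ W L hW01 hWsym hconn hLpos hL1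
    adm hadm P hP FN hFN Bopt hmin
end
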